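/- arXiv:2310.01086 — 4 statements merged into one kernel-verified Lean document; each statement's English description precedes it below -/
import Mathlib

section
/- Let τ be an involutive antiautomorphism of Mat(d,k) with dual τ*, and let P₁₂, P₂₃ be the operators on Mat*(d,k)⊗³ acting as P (defined by P(E*_{ij}⊗E*_{kl}) = E*_{kj}⊗E*_{il}) on the indicated pairs of factors. Then (12)∘(τ*)⊗³∘P₁₂∘P₂₃ = P₁₂∘P₂₃∘(23)∘(τ*)⊗³ as endomorphisms of Mat*(d,k)⊗³, where (12) and (23) are the indicated transpositions of tensor factors. -/
/-!
Write `φ(u, v)` for the functional `M ↦ uᵀ M v` on matrices, so that `E*_{ij} = φ(e_i, e_j)`.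
By bilinearity `P` exchanges the left vectors: `P (φ(u, v) ⊗ φ(u', v')) = φ(u', v) ⊗ φ(u, v')`.
Since `M ↦ (τ M)ᵀ` is an algebra automorphism, Skolem–Noether gives `τ M = (A M A⁻¹)ᵀ`, so
`τ* φ(u, v) = φ(Aᵀ v, A⁻¹ u)` exchanges left and right vectors. Both sides of the identity then send
`φ(u₁, v₁) ⊗ φ(u₂, v₂) ⊗ φ(u₃, v₃)` to `φ(Aᵀv₂, A⁻¹u₁) ⊗ φ(Aᵀv₁, A⁻¹u₃) ⊗ φ(Aᵀv₃, A⁻¹u₂)`.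
-/

open TensorProduct

noncomputable section

/-- The dual basis element `E*_{ij}` of the dual of the matrix algebra. -/
def estar (k : Type*) [Field k] {d : ℕ} (i j : Fin d) :
    Module.Dual k (Matrix (Fin d) (Fin d) k) where
  toFun M := M i j
  map_add' _ _ := rfl
  map_smul' _ _ := rfl

/-- An operator on `V ⊗ V` acting on the first two factors of `V ⊗ V ⊗ V`. -/
def onFirstTwo (k V : Type*) [CommRing k] [AddCommGroup V] [Module k V]
    (P : V ⊗[k] V →ₗ[k] V ⊗[k] V) : V ⊗[k] (V ⊗[k] V) →ₗ[k] V ⊗[k] (V ⊗[k] V) :=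
  (TensorProduct.assoc k V V V).toLinearMap ∘ₗ LinearMap.rTensor V P ∘ₗ
    (TensorProduct.assoc k V V V).symm.toLinearMap

/-- The transposition `(12)` of the first two factors of `V ⊗ V ⊗ V`. -/
def swap12 (k V : Type*) [CommRing k] [AddCommGroup V] [Module k V] :
    V ⊗[k] (V ⊗[k] V) →ₗ[k] V ⊗[k] (V ⊗[k] V) :=
  onFirstTwo k V (TensorProduct.comm k V V).toLinearMap

/-- The transposition `(23)` of the last two factors of `V ⊗ V ⊗ V`. -/
def swap23 (k V : Type*) [CommRing k] [AddCommGroup V] [Module k V] :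
    V ⊗[k] (V ⊗[k] V) →ₗ[k] V ⊗[k] (V ⊗[k] V) :=
  LinearMap.lTensor V (TensorProduct.comm k V V).toLinearMap

namespace Matrix

variable {K n : Type*} [Field K] [Fintype n] [DecidableEq n]

theorem exists_eq_transpose_conj_of_antimul (τ : Matrix n n K →ₗ[K] Matrix n n K)
    (hanti : ∀ M N, τ (M * N) = τ N * τ M) (hbij : Function.Bijective τ) :
    ∃ A : GL n K, ∀ M, τ M = ((A : Matrix n n K) * M * (↑A⁻¹ : Matrix n n K))ᵀ := by
  have hone : τ 1 = 1 := by
    obtain ⟨X, hX⟩ := hbij.2 1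
    simpa [hX] using (hanti X 1).symm
  let σ : Matrix n n K ≃ₐ[K] Matrix n n K :=
    AlgEquiv.ofLinearEquiv ((LinearEquiv.ofBijective τ hbij).trans (transposeLinearEquiv n n K K))
      (by simp [hone]) (fun M N => by simp [hanti])
  obtain ⟨T, hT⟩ :=
    ((toLinAlgEquiv' (R := K) (n := n)).symm.trans
      (σ.trans toLinAlgEquiv')).eq_linearEquivConjAlgEquiv
  let A : GL n K := ⟨LinearMap.toMatrix' T, LinearMap.toMatrix' T.symm, by
    rw [← LinearMap.toMatrix'_comp]; simp, by rw [← LinearMap.toMatrix'_comp]; simp⟩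
  refine ⟨A, fun M => ?_⟩
  have hσ : σ M = (A : Matrix n n K) * M * (↑A⁻¹ : Matrix n n K) := by
    have hlin (N : Matrix n n K) : LinearMap.toMatrix' (toLinAlgEquiv' N) = N :=
      LinearMap.toMatrix'_toLin' N
    have := congrArg LinearMap.toMatrix' (AlgEquiv.congr_fun hT (toLinAlgEquiv' M))
    simp only [AlgEquiv.trans_apply, AlgEquiv.symm_apply_apply, LinearEquiv.conjAlgEquiv_apply,
      LinearMap.toMatrix'_comp, hlin] at this
    rw [Matrix.mul_assoc]
    exact this
  rw [← hσ]
  rfl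

end Matrix

section MatrixCoeff

open Matrix

variable {R m n : Type*} [CommSemiring R] [Fintype m] [Fintype n]

def matrixCoeff (u : m → R) (v : n → R) : Module.Dual R (Matrix m n R) where
  toFun M := u ⬝ᵥ (M *ᵥ v)
  map_add' M N := by simp [Matrix.add_mulVec]
  map_smul' c M := by simp [Matrix.smul_mulVec]

@[simp]
theorem matrixCoeff_apply (u : m → R) (v : n → R) (M : Matrix m n R) :
    matrixCoeff u v M = u ⬝ᵥ (M *ᵥ v) := rfl

theorem dualMap_matrixCoeff {m' n' : Type*} [Fintype m'] [Fintype n']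
    {τ : Matrix m n R →ₗ[R] Matrix m' n' R} {A : Matrix n' m R} {B : Matrix n m' R}
    (hτ : ∀ M, τ M = (A * M * B)ᵀ) (u : m' → R) (v : n' → R) :
    τ.dualMap (matrixCoeff u v) = matrixCoeff (v ᵥ* A) (B *ᵥ u) := by
  ext M
  simp only [LinearMap.dualMap_apply, matrixCoeff_apply, hτ, mulVec_transpose, dotProduct_mulVec,
    vecMul_vecMul, dotProduct_comm u]

end MatrixCoeff

section Estar

open Matrix

variable {k : Type*} [Field k] {d : ℕ}

@[simp]
theorem estar_apply (i j : Fin d) (M : Matrix (Fin d) (Fin d) k) : estar k i j M = M i j := rfl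

theorem estar_eq_matrixCoeff (i j : Fin d) :
    estar k i j = matrixCoeff (Pi.single i 1) (Pi.single j 1) := by
  ext M
  simp [mulVec_single]

theorem matrixCoeff_eq_sum_estar (u v : Fin d → k) :
    matrixCoeff u v = ∑ i, ∑ j, (u i * v j) • estar k i j := by
  ext M
  simp only [matrixCoeff_apply, dotProduct, mulVec, Finset.mul_sum, LinearMap.sum_apply,
    LinearMap.smul_apply, estar_apply, smul_eq_mul]
  exact Finset.sum_congr rfl fun _ _ => Finset.sum_congr rfl fun _ _ => by ring

theorem map_matrixCoeff_tmul
    {P : Module.Dual k (Matrix (Fin d) (Fin d) k) ⊗[k] Module.Dual k (Matrix (Fin d) (Fin d) k)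
      →ₗ[k] Module.Dual k (Matrix (Fin d) (Fin d) k) ⊗[k] Module.Dual k (Matrix (Fin d) (Fin d) k)}
    (hP : ∀ i j a b : Fin d, P (estar k i j ⊗ₜ[k] estar k a b) = estar k a j ⊗ₜ[k] estar k i b)
    (u v u' v' : Fin d → k) :
    P (matrixCoeff u v ⊗ₜ matrixCoeff u' v') = matrixCoeff u' v ⊗ₜ matrixCoeff u v' := by
  simp only [matrixCoeff_eq_sum_estar, sum_tmul, tmul_sum, ← smul_tmul', tmul_smul, map_sum,
    map_smul, hP, Finset.smul_sum, smul_smul]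
  rw [Finset.sum_comm]
  conv_rhs => rw [Finset.sum_comm]
  refine Finset.sum_congr rfl fun b _ => ?_
  rw [Finset.sum_comm]
  refine Finset.sum_congr rfl fun i _ => Finset.sum_congr rfl fun a _ =>
    Finset.sum_congr rfl fun j _ => ?_
  congr 1
  ring

theorem dualBasis_stdBasis_eq_estar (p : Fin d × Fin d) :
    (stdBasis k (Fin d) (Fin d)).dualBasis p = estar k p.1 p.2 := by
  refine (stdBasis k (Fin d) (Fin d)).ext fun q => ?_
  rw [Module.Basis.dualBasis_apply_self, stdBasis_eq_single, estar_apply]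
  simp [single_apply, Prod.ext_iff, eq_comm]

end Estar

section TripleTensor

variable {k V : Type*} [CommRing k] [AddCommGroup V] [Module k V]

theorem onFirstTwo_tmul (P : V ⊗[k] V →ₗ[k] V ⊗[k] V) (x y z : V) :
    onFirstTwo k V P (x ⊗ₜ (y ⊗ₜ z)) = TensorProduct.assoc k V V V (P (x ⊗ₜ y) ⊗ₜ z) := by
  simp [onFirstTwo]

theorem swap12_tmul (x y z : V) : swap12 k V (x ⊗ₜ (y ⊗ₜ z)) = y ⊗ₜ (x ⊗ₜ z) := by
  simp [swap12, onFirstTwo_tmul]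

end TripleTensor

theorem swap_tau_star_P12_P23_general (k : Type*) [Field k] (d : ℕ)
    (P : Module.Dual k (Matrix (Fin d) (Fin d) k) ⊗[k] Module.Dual k (Matrix (Fin d) (Fin d) k)
      →ₗ[k] Module.Dual k (Matrix (Fin d) (Fin d) k) ⊗[k] Module.Dual k (Matrix (Fin d) (Fin d) k))
    (hP : ∀ i j a b : Fin d,
      P (estar k i j ⊗ₜ[k] estar k a b) = estar k a j ⊗ₜ[k] estar k i b)
    (τ : Matrix (Fin d) (Fin d) k →ₗ[k] Matrix (Fin d) (Fin d) k)
    (hanti : ∀ M N : Matrix (Fin d) (Fin d) k, τ (M * N) = τ N * τ M)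
    (hinv : ∀ M : Matrix (Fin d) (Fin d) k, τ (τ M) = M) :
    swap12 k _ ∘ₗ
        TensorProduct.map τ.dualMap (TensorProduct.map τ.dualMap τ.dualMap) ∘ₗ
        onFirstTwo k _ P ∘ₗ LinearMap.lTensor (Module.Dual k (Matrix (Fin d) (Fin d) k)) P
      = onFirstTwo k _ P ∘ₗ LinearMap.lTensor (Module.Dual k (Matrix (Fin d) (Fin d) k)) P ∘ₗ
          swap23 k _ ∘ₗ
          TensorProduct.map τ.dualMap (TensorProduct.map τ.dualMap τ.dualMap) := by
  obtain ⟨A, hA⟩ :=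
    Matrix.exists_eq_transpose_conj_of_antimul τ hanti (Function.Involutive.bijective hinv)
  let b := (Matrix.stdBasis k (Fin d) (Fin d)).dualBasis
  refine (b.tensorProduct (b.tensorProduct b)).ext fun ⟨p, q, r⟩ => ?_
  simp [b, dualBasis_stdBasis_eq_estar, estar_eq_matrixCoeff, onFirstTwo_tmul, swap12_tmul,
    swap23, map_matrixCoeff_tmul hP, dualMap_matrixCoeff hA]

/-- `(12) ∘ (τ*)⊗³ ∘ P₁₂ ∘ P₂₃ = P₁₂ ∘ P₂₃ ∘ (23) ∘ (τ*)⊗³` on `Mat*(d,k)⊗³`. -/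
theorem swap_tau_star_P12_P23 (k : Type*) [Field k] [CharZero k] [IsAlgClosed k] (d : ℕ)
    (P : Module.Dual k (Matrix (Fin d) (Fin d) k) ⊗[k] Module.Dual k (Matrix (Fin d) (Fin d) k)
      →ₗ[k] Module.Dual k (Matrix (Fin d) (Fin d) k) ⊗[k] Module.Dual k (Matrix (Fin d) (Fin d) k))
    (hP : ∀ i j a b : Fin d,
      P (estar k i j ⊗ₜ[k] estar k a b) = estar k a j ⊗ₜ[k] estar k i b)
    (τ : Matrix (Fin d) (Fin d) k →ₗ[k] Matrix (Fin d) (Fin d) k)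
    (hanti : ∀ M N : Matrix (Fin d) (Fin d) k, τ (M * N) = τ N * τ M)
    (hinv : ∀ M : Matrix (Fin d) (Fin d) k, τ (τ M) = M) :
    swap12 k _ ∘ₗ
        TensorProduct.map τ.dualMap (TensorProduct.map τ.dualMap τ.dualMap) ∘ₗ
        onFirstTwo k _ P ∘ₗ LinearMap.lTensor (Module.Dual k (Matrix (Fin d) (Fin d) k)) P
      = onFirstTwo k _ P ∘ₗ LinearMap.lTensor (Module.Dual k (Matrix (Fin d) (Fin d) k)) P ∘ₗ
          swap23 k _ ∘ₗ
          TensorProduct.map τ.dualMap (TensorProduct.map τ.dualMap τ.dualMap) :=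
  swap_tau_star_P12_P23_general k d P hP τ hanti hinv

end
end

section
/- Let A = k⟨α₁,…,α_L⟩ with the quadratic double bracket {{α_i, α_j}} = Σ_{k,l} r^{kl}_{ij} α_k ⊗ α_l determined by a tensor r^{kl}_{ij} ∈ k (extended by the Leibniz rule), and let φ be either φ⁺ (reversal of words) or φ⁻ (signed reversal). Then the bracket is φ-adapted, i.e. (φ⊗φ)({{α_i,α_j}}) = {{φ(α_i),φ(α_j)}}°, if and only if r^{kl}_{ij} = r^{lk}_{ij} for all i,j,k,l. -/
/-! Both sides of the adaptedness identity obey the same twisted Leibniz rule, since `φ` reverses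
products and `°` exchanges `lTensor` and `rTensor`; together with skew-symmetry this reduces
adaptedness to pairs of generators. There the signs of `φ⁻` cancel in pairs, so adaptedness at
`(αᵢ, αⱼ)` reads `∑ r^{kl}_{ij} α_k ⊗ α_l = ∑ r^{lk}_{ij} α_k ⊗ α_l`, and the `α_k ⊗ α_l` are
linearly independent. -/

open TensorProduct FreeAlgebra

namespace FreeAlgebra

variable (R X : Type*)

theorem basisFreeMonoid_of [CommSemiring R] (x : X) :
    basisFreeMonoid R X (FreeMonoid.of x) = ι R x := by
  rw [basisFreeMonoid, Module.Basis.map_apply]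
  simp [equivMonoidAlgebraFreeMonoid]

theorem linearIndependent_ι [CommSemiring R] :
    LinearIndependent R (ι R : X → FreeAlgebra R X) := by
  simpa only [Function.comp_def, basisFreeMonoid_of] using
    (basisFreeMonoid R X).linearIndependent.comp _ FreeMonoid.of_injective

theorem linearIndependent_ι_tmul_ι [CommRing R] :
    LinearIndependent R fun x : X × X => ι R x.1 ⊗ₜ[R] ι R x.2 :=
  (linearIndependent_ι R X).tmul_of_flat_left (linearIndependent_ι R X)

end FreeAlgebra

section Adapted

variable {R A : Type*} [CommRing R] [Ring A] [Algebra R A]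

/-- A derivation `A → A ⊗ A` for the outer bimodule structure
`b • (x' ⊗ x'') • c = b x' ⊗ x'' c`. -/
def IsDoubleDerivation (δ : A →ₗ[R] A ⊗[R] A) : Prop :=
  ∀ b c, δ (b * c) = LinearMap.lTensor A (LinearMap.mulRight R c) (δ b)
    + LinearMap.rTensor A (LinearMap.mulLeft R b) (δ c)

theorem IsDoubleDerivation.map_one {δ : A →ₗ[R] A ⊗[R] A} (hδ : IsDoubleDerivation δ) :
    δ 1 = 0 := by
  simpa [LinearMap.mulRight_one, LinearMap.mulLeft_one] using hδ 1 1

def IsAdaptedAt (D : A →ₗ[R] A →ₗ[R] A ⊗[R] A) (φ : A →ₗ[R] A) (a b : A) : Prop :=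
  map φ φ (D a b) = TensorProduct.comm R A A (D (φ a) (φ b))

variable {D : A →ₗ[R] A →ₗ[R] A ⊗[R] A} {φ : A →ₗ[R] A}

theorem IsAdaptedAt.symm (hskew : ∀ a b, D a b = - TensorProduct.comm R A A (D b a)) {a b : A}
    (h : IsAdaptedAt D φ a b) : IsAdaptedAt D φ b a := by
  unfold IsAdaptedAt at *
  rw [hskew b, map_neg, map_comm, h, comm_comm, hskew (φ b), map_neg, comm_comm]

theorem IsAdaptedAt.add_right {a b c : A} (hb : IsAdaptedAt D φ a b) (hc : IsAdaptedAt D φ a c) :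
    IsAdaptedAt D φ a (b + c) := by
  unfold IsAdaptedAt at *
  simp only [map_add, hb, hc]

theorem comp_mulRight_eq_mulLeft_comp (hφ : ∀ x y, φ (x * y) = φ y * φ x) (c : A) :
    φ ∘ₗ LinearMap.mulRight R c = LinearMap.mulLeft R (φ c) ∘ₗ φ :=
  LinearMap.ext fun x => hφ x c

theorem comp_mulLeft_eq_mulRight_comp (hφ : ∀ x y, φ (x * y) = φ y * φ x) (c : A) :
    φ ∘ₗ LinearMap.mulLeft R c = LinearMap.mulRight R (φ c) ∘ₗ φ :=
  LinearMap.ext fun x => hφ c x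

theorem IsAdaptedAt.mul_right
    (hleib : ∀ a, IsDoubleDerivation (D a))
    (hφ : ∀ x y, φ (x * y) = φ y * φ x) {a b c : A}
    (hb : IsAdaptedAt D φ a b) (hc : IsAdaptedAt D φ a c) : IsAdaptedAt D φ a (b * c) := by
  unfold IsAdaptedAt at *
  rw [hleib, map_add, LinearMap.map_lTensor, LinearMap.map_rTensor,
    comp_mulRight_eq_mulLeft_comp hφ, comp_mulLeft_eq_mulRight_comp hφ,
    ← LinearMap.lTensor_map, ← LinearMap.rTensor_map, hb, hc,
    LinearMap.lTensor_comm, LinearMap.rTensor_comm, hφ, hleib, map_add, add_comm]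

theorem isAdaptedAt_algebraMap_right
    (hleib : ∀ a, IsDoubleDerivation (D a))
    (hφone : φ 1 = 1) (a : A) (c : R) : IsAdaptedAt D φ a (algebraMap R A c) := by
  simp only [IsAdaptedAt, Algebra.algebraMap_eq_smul_one, map_smul, hφone,
    (hleib a).map_one, (hleib (φ a)).map_one, smul_zero, map_zero]

end Adapted

section FreeAlgebra

variable {R X : Type*} [CommRing R]

theorem isAdaptedAt_of_ι_ι
    {D : FreeAlgebra R X →ₗ[R] FreeAlgebra R X →ₗ[R] FreeAlgebra R X ⊗[R] FreeAlgebra R X}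
    {φ : FreeAlgebra R X →ₗ[R] FreeAlgebra R X}
    (hskew : ∀ a b, D a b = - TensorProduct.comm R _ _ (D b a))
    (hleib : ∀ a, IsDoubleDerivation (D a))
    (hφ : ∀ x y, φ (x * y) = φ y * φ x) (hφone : φ 1 = 1)
    (hgen : ∀ i j, IsAdaptedAt D φ (ι R i) (ι R j)) (a b : FreeAlgebra R X) :
    IsAdaptedAt D φ a b := by
  have right (a : FreeAlgebra R X) (ha : ∀ j, IsAdaptedAt D φ a (ι R j)) b :
      IsAdaptedAt D φ a b := by
    induction b using FreeAlgebra.induction with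
    | grade0 c => exact isAdaptedAt_algebraMap_right hleib hφone a c
    | grade1 j => exact ha j
    | mul x y hx hy => exact hx.mul_right hleib hφ hy
    | add x y hx hy => exact hx.add_right hy
  exact right a (fun j => (right (ι R j) (hgen j) a).symm hskew) b

def FixesGeneratorsUpToSign (φ : FreeAlgebra R X →ₗ[R] FreeAlgebra R X) : Prop :=
  (∀ i, φ (ι R i) = ι R i) ∨ (∀ i, φ (ι R i) = - ι R i)

theorem FixesGeneratorsUpToSign.apply₂_ι_ι {φ : FreeAlgebra R X →ₗ[R] FreeAlgebra R X}
    (hφ : FixesGeneratorsUpToSign φ) {P : Type*} [AddCommGroup P] [Module R P]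
    (B : FreeAlgebra R X →ₗ[R] FreeAlgebra R X →ₗ[R] P) (i j : X) :
    B (φ (ι R i)) (φ (ι R j)) = B (ι R i) (ι R j) := by
  rcases hφ with h | h <;> simp only [h, map_neg, LinearMap.neg_apply, neg_neg]

theorem FixesGeneratorsUpToSign.map_map_ι_tmul_ι {φ : FreeAlgebra R X →ₗ[R] FreeAlgebra R X}
    (hφ : FixesGeneratorsUpToSign φ) (i j : X) :
    map φ φ (ι R i ⊗ₜ[R] ι R j) = ι R i ⊗ₜ[R] ι R j :=
  hφ.apply₂_ι_ι (TensorProduct.mk R _ _) i j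

variable [Fintype X]

theorem isAdaptedAt_ι_ι_iff {r : X → X → X → X → R}
    {D : FreeAlgebra R X →ₗ[R] FreeAlgebra R X →ₗ[R] FreeAlgebra R X ⊗[R] FreeAlgebra R X}
    {φ : FreeAlgebra R X →ₗ[R] FreeAlgebra R X}
    (hval : ∀ i j, D (ι R i) (ι R j) = ∑ p, ∑ q, r p q i j • (ι R p ⊗ₜ[R] ι R q))
    (hφ : FixesGeneratorsUpToSign φ) (i j : X) :
    IsAdaptedAt D φ (ι R i) (ι R j) ↔ ∀ p q, r p q i j = r q p i j := by
  have hmap : map φ φ (D (ι R i) (ι R j)) =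
      ∑ pq : X × X, r pq.1 pq.2 i j • (ι R pq.1 ⊗ₜ[R] ι R pq.2) := by
    simp only [hval, map_sum, map_smul, hφ.map_map_ι_tmul_ι, Fintype.sum_prod_type]
  have hcomm : TensorProduct.comm R _ _ (D (φ (ι R i)) (φ (ι R j))) =
      ∑ pq : X × X, r pq.2 pq.1 i j • (ι R pq.1 ⊗ₜ[R] ι R pq.2) := by
    rw [hφ.apply₂_ι_ι, hval, Fintype.sum_prod_type, Finset.sum_comm]
    simp only [map_sum, map_smul, comm_tmul]
  have hinj := linearIndependent_iff_injective_fintypeLinearCombination.1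
    (linearIndependent_ι_tmul_ι R X)
  rw [IsAdaptedAt, hmap, hcomm, ← Fintype.linearCombination_apply,
    ← Fintype.linearCombination_apply, hinj.eq_iff, funext_iff, Prod.forall]

end FreeAlgebra

theorem quadratic_bracket_adapted_iff_general
    (k : Type*) [Field k] (L : ℕ)
    (r : Fin L → Fin L → Fin L → Fin L → k)
    (D : FreeAlgebra k (Fin L) →ₗ[k] FreeAlgebra k (Fin L) →ₗ[k]
      FreeAlgebra k (Fin L) ⊗[k] FreeAlgebra k (Fin L))
    (hskew : ∀ a b, D a b = - (TensorProduct.comm k _ _) (D b a))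
    (hleib : ∀ a b c, D a (b * c)
      = LinearMap.lTensor _ (LinearMap.mulRight k c) (D a b)
        + LinearMap.rTensor _ (LinearMap.mulLeft k b) (D a c))
    (hval : ∀ i j : Fin L, D (FreeAlgebra.ι k i) (FreeAlgebra.ι k j)
      = ∑ p : Fin L, ∑ q : Fin L, r p q i j • (FreeAlgebra.ι k p ⊗ₜ[k] FreeAlgebra.ι k q))
    (φ : FreeAlgebra k (Fin L) →ₗ[k] FreeAlgebra k (Fin L))
    (hφanti : ∀ x y, φ (x * y) = φ y * φ x)
    (hφone : φ 1 = 1)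
    (hφgen : (∀ i : Fin L, φ (FreeAlgebra.ι k i) = FreeAlgebra.ι k i)
      ∨ (∀ i : Fin L, φ (FreeAlgebra.ι k i) = - FreeAlgebra.ι k i)) :
    (∀ a b, TensorProduct.map φ φ (D a b) = (TensorProduct.comm k _ _) (D (φ a) (φ b)))
      ↔ (∀ p q i j : Fin L, r p q i j = r q p i j) := by
  have hgen (i j : Fin L) := isAdaptedAt_ι_ι_iff hval hφgen i j
  constructor
  · intro h p q i j
    exact (hgen i j).1 (h _ _) p q
  · intro hr
    exact isAdaptedAt_of_ι_ι hskew hleib hφanti hφone fun i j =>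
      (hgen i j).2 fun p q => hr p q i j

/-- a quadratic double bracket on the free algebra determined by a tensor
`r^{kl}_{ij}` is adapted to `φ⁺` (word reversal) or `φ⁻` (signed word reversal)
if and only if `r^{kl}_{ij} = r^{lk}_{ij}`, i.e. the tensor is symmetric in the
upper indices. -/
theorem quadratic_bracket_adapted_iff
    (k : Type*) [Field k] [CharZero k] (L : ℕ)
    (r : Fin L → Fin L → Fin L → Fin L → k)
    (D : FreeAlgebra k (Fin L) →ₗ[k] FreeAlgebra k (Fin L) →ₗ[k]
      FreeAlgebra k (Fin L) ⊗[k] FreeAlgebra k (Fin L))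
    (hskew : ∀ a b, D a b = - (TensorProduct.comm k _ _) (D b a))
    (hleib : ∀ a b c, D a (b * c)
      = LinearMap.lTensor _ (LinearMap.mulRight k c) (D a b)
        + LinearMap.rTensor _ (LinearMap.mulLeft k b) (D a c))
    (hval : ∀ i j : Fin L, D (FreeAlgebra.ι k i) (FreeAlgebra.ι k j)
      = ∑ p : Fin L, ∑ q : Fin L, r p q i j • (FreeAlgebra.ι k p ⊗ₜ[k] FreeAlgebra.ι k q))
    (φ : FreeAlgebra k (Fin L) →ₗ[k] FreeAlgebra k (Fin L))
    (hφanti : ∀ x y, φ (x * y) = φ y * φ x)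
    (hφone : φ 1 = 1)
    (hφgen : (∀ i : Fin L, φ (FreeAlgebra.ι k i) = FreeAlgebra.ι k i)
      ∨ (∀ i : Fin L, φ (FreeAlgebra.ι k i) = - FreeAlgebra.ι k i)) :
    (∀ a b, TensorProduct.map φ φ (D a b) = (TensorProduct.comm k _ _) (D (φ a) (φ b)))
      ↔ (∀ p q i j : Fin L, r p q i j = r q p i j) :=
  quadratic_bracket_adapted_iff_general k L r D hskew hleib hval φ hφanti hφone hφgen
end

section
/- Let R : k^L ⊗ k^L → k^L ⊗ k^L be given by a tensor r^{kl}_{ij} that is skew-symmetric under simultaneous swap of upper and lower indices (r^{kl}_{ij} = −r^{lk}_{ji}). Then the relation R¹²R²³ + R²³R³¹ + R³¹R¹² = 0 on (k^L)⊗³ is equivalent to the associative Yang–Baxter equation R¹²R¹³ − R²³R¹² + R¹³R²³ = 0. -/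
/-! Conjugation by the flip of the last two tensor factors sends `R¹²` to `R¹³` and, by the
skew-symmetry of `r`, sends `R²³` to `-R²³` and `R³¹` to `-R¹²`. Being a ring automorphism of
`End((k^L)⊗³)`, it therefore carries `R¹²R²³ + R²³R³¹ + R³¹R¹²` to
`-(R¹²R¹³ - R²³R¹² + R¹³R²³)`, so one vanishes exactly when the other does. -/

open TensorProduct

theorem Module.Basis.ext_tmul_tmul {R M N P Q ι κ μ : Type*} [CommSemiring R]
    [AddCommMonoid M] [AddCommMonoid N] [AddCommMonoid P] [AddCommMonoid Q] [Module R M]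
    [Module R N] [Module R P] [Module R Q]
    (b : Module.Basis ι R M) (c : Module.Basis κ R N) (d : Module.Basis μ R P)
    {f g : M ⊗[R] N ⊗[R] P →ₗ[R] Q}
    (h : ∀ i j m, f (b i ⊗ₜ c j ⊗ₜ d m) = g (b i ⊗ₜ c j ⊗ₜ d m)) : f = g :=
  ((b.tensorProduct c).tensorProduct d).ext fun ⟨⟨i, j⟩, m⟩ => by
    simpa only [Module.Basis.tensorProduct_apply] using h i j m

theorem cyclic_eq_zero_iff_of_ringEquiv {A : Type*} [Ring A] (σ : A ≃+* A) {a b c d : A}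
    (ha : σ a = c) (hb : σ b = -b) (hd : σ d = -a) :
    a * b + b * d + d * a = 0 ↔ a * c - b * a + c * b = 0 := by
  have hconj : σ (a * b + b * d + d * a) = -(a * c - b * a + c * b) := by
    rw [map_add, map_add, map_mul, map_mul, map_mul, ha, hb, hd]
    noncomm_ring
  rw [← map_eq_zero_iff σ σ.injective, hconj, neg_eq_zero]

section

variable {k V ι : Type*} [Fintype ι] {r : ι → ι → ι → ι → k}

theorem conjRingEquiv_rightComm_R12_eq_R13 [CommSemiring k] [AddCommMonoid V] [Module k V]
    (e : Module.Basis ι k V) {R12 R13 : Module.End k (V ⊗[k] V ⊗[k] V)}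
    (hR12 : ∀ i j m, R12 (e i ⊗ₜ e j ⊗ₜ e m) = ∑ p, ∑ q, r p q i j • (e p ⊗ₜ e q ⊗ₜ e m))
    (hR13 : ∀ i j m, R13 (e i ⊗ₜ e j ⊗ₜ e m) = ∑ p, ∑ q, r p q i m • (e p ⊗ₜ e j ⊗ₜ e q)) :
    (rightComm k V V V).conjRingEquiv R12 = R13 :=
  Module.Basis.ext_tmul_tmul e e e fun i j m => by
    simp only [LinearEquiv.conjRingEquiv_apply_apply, rightComm_symm, rightComm_tmul, hR12,
      hR13, map_sum, map_smul]

variable [CommRing k] [AddCommGroup V] [Module k V] (e : Module.Basis ι k V)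

theorem conjRingEquiv_rightComm_R23_eq_neg (hr : ∀ p q i j, r p q i j = - r q p j i)
    {R23 : Module.End k (V ⊗[k] V ⊗[k] V)}
    (hR23 : ∀ i j m, R23 (e i ⊗ₜ e j ⊗ₜ e m) = ∑ p, ∑ q, r p q j m • (e i ⊗ₜ e p ⊗ₜ e q)) :
    (rightComm k V V V).conjRingEquiv R23 = -R23 :=
  Module.Basis.ext_tmul_tmul e e e fun i j m => by
    simp only [LinearEquiv.conjRingEquiv_apply_apply, rightComm_symm, rightComm_tmul, hR23,
      map_sum, map_smul, LinearMap.neg_apply]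
    rw [Finset.sum_comm]
    simp only [← Finset.sum_neg_distrib]
    -- `M` must be named: unifying `neg_smul` against the iterated tensor product gets stuck.
    exact Finset.sum_congr rfl fun p _ => Finset.sum_congr rfl fun q _ => by
      rw [hr]; exact neg_smul (M := V ⊗[k] V ⊗[k] V) _ _

theorem conjRingEquiv_rightComm_R31_eq_neg_R12 (hr : ∀ p q i j, r p q i j = - r q p j i)
    {R12 R31 : Module.End k (V ⊗[k] V ⊗[k] V)}
    (hR12 : ∀ i j m, R12 (e i ⊗ₜ e j ⊗ₜ e m) = ∑ p, ∑ q, r p q i j • (e p ⊗ₜ e q ⊗ₜ e m))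
    (hR31 : ∀ i j m, R31 (e i ⊗ₜ e j ⊗ₜ e m) = ∑ p, ∑ q, r p q m i • (e q ⊗ₜ e j ⊗ₜ e p)) :
    (rightComm k V V V).conjRingEquiv R31 = -R12 :=
  Module.Basis.ext_tmul_tmul e e e fun i j m => by
    simp only [LinearEquiv.conjRingEquiv_apply_apply, rightComm_symm, rightComm_tmul, hR31,
      hR12, map_sum, map_smul, LinearMap.neg_apply]
    rw [Finset.sum_comm]
    simp only [← Finset.sum_neg_distrib]
    exact Finset.sum_congr rfl fun p _ => Finset.sum_congr rfl fun q _ => by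
      rw [hr]; exact neg_smul (M := V ⊗[k] V ⊗[k] V) _ _

theorem cyclic_eq_zero_iff_aybe_eq_zero (hr : ∀ p q i j, r p q i j = - r q p j i)
    {R12 R23 R13 R31 : Module.End k (V ⊗[k] V ⊗[k] V)}
    (hR12 : ∀ i j m, R12 (e i ⊗ₜ e j ⊗ₜ e m) = ∑ p, ∑ q, r p q i j • (e p ⊗ₜ e q ⊗ₜ e m))
    (hR23 : ∀ i j m, R23 (e i ⊗ₜ e j ⊗ₜ e m) = ∑ p, ∑ q, r p q j m • (e i ⊗ₜ e p ⊗ₜ e q))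
    (hR13 : ∀ i j m, R13 (e i ⊗ₜ e j ⊗ₜ e m) = ∑ p, ∑ q, r p q i m • (e p ⊗ₜ e j ⊗ₜ e q))
    (hR31 : ∀ i j m, R31 (e i ⊗ₜ e j ⊗ₜ e m) = ∑ p, ∑ q, r p q m i • (e q ⊗ₜ e j ⊗ₜ e p)) :
    (∀ v, R12 (R23 v) + R23 (R31 v) + R31 (R12 v) = 0) ↔
      ∀ v, R12 (R13 v) - R23 (R12 v) + R13 (R23 v) = 0 := by
  suffices R12 * R23 + R23 * R31 + R31 * R12 = 0 ↔ R12 * R13 - R23 * R12 + R13 * R23 = 0 by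
    simpa only [LinearMap.ext_iff, Module.End.mul_apply, LinearMap.add_apply,
      LinearMap.sub_apply, LinearMap.zero_apply] using this
  -- `A` must be named for the same reason as `M` above.
  exact cyclic_eq_zero_iff_of_ringEquiv (A := Module.End k (V ⊗[k] V ⊗[k] V)) _
    (conjRingEquiv_rightComm_R12_eq_R13 e hR12 hR13)
    (conjRingEquiv_rightComm_R23_eq_neg e hr hR23)
    (conjRingEquiv_rightComm_R31_eq_neg_R12 e hr hR12 hR31)

end

theorem skew_cyclic_iff_AYBE_general
    (k : Type*) [Field k] (L : ℕ)
    (r : Fin L → Fin L → Fin L → Fin L → k)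
    (hr : ∀ p q i j : Fin L, r p q i j = - r q p j i)
    (R12 R23 R13 R31 : (Fin L → k) ⊗[k] (Fin L → k) ⊗[k] (Fin L → k) →ₗ[k]
      (Fin L → k) ⊗[k] (Fin L → k) ⊗[k] (Fin L → k))
    (hR12 : ∀ i j m : Fin L,
      R12 ((Pi.basisFun k (Fin L)) i ⊗ₜ[k] (Pi.basisFun k (Fin L)) j
          ⊗ₜ[k] (Pi.basisFun k (Fin L)) m)
        = ∑ p : Fin L, ∑ q : Fin L, r p q i j •
            ((Pi.basisFun k (Fin L)) p ⊗ₜ[k] (Pi.basisFun k (Fin L)) q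
              ⊗ₜ[k] (Pi.basisFun k (Fin L)) m))
    (hR23 : ∀ i j m : Fin L,
      R23 ((Pi.basisFun k (Fin L)) i ⊗ₜ[k] (Pi.basisFun k (Fin L)) j
          ⊗ₜ[k] (Pi.basisFun k (Fin L)) m)
        = ∑ p : Fin L, ∑ q : Fin L, r p q j m •
            ((Pi.basisFun k (Fin L)) i ⊗ₜ[k] (Pi.basisFun k (Fin L)) p
              ⊗ₜ[k] (Pi.basisFun k (Fin L)) q))
    (hR13 : ∀ i j m : Fin L,
      R13 ((Pi.basisFun k (Fin L)) i ⊗ₜ[k] (Pi.basisFun k (Fin L)) j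
          ⊗ₜ[k] (Pi.basisFun k (Fin L)) m)
        = ∑ p : Fin L, ∑ q : Fin L, r p q i m •
            ((Pi.basisFun k (Fin L)) p ⊗ₜ[k] (Pi.basisFun k (Fin L)) j
              ⊗ₜ[k] (Pi.basisFun k (Fin L)) q))
    (hR31 : ∀ i j m : Fin L,
      R31 ((Pi.basisFun k (Fin L)) i ⊗ₜ[k] (Pi.basisFun k (Fin L)) j
          ⊗ₜ[k] (Pi.basisFun k (Fin L)) m)
        = ∑ p : Fin L, ∑ q : Fin L, r p q m i •
            ((Pi.basisFun k (Fin L)) q ⊗ₜ[k] (Pi.basisFun k (Fin L)) j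
              ⊗ₜ[k] (Pi.basisFun k (Fin L)) p)) :
    (∀ v : (Fin L → k) ⊗[k] (Fin L → k) ⊗[k] (Fin L → k),
        R12 (R23 v) + R23 (R31 v) + R31 (R12 v) = 0)
      ↔ (∀ v : (Fin L → k) ⊗[k] (Fin L → k) ⊗[k] (Fin L → k),
          R12 (R13 v) - R23 (R12 v) + R13 (R23 v) = 0) :=
  cyclic_eq_zero_iff_aybe_eq_zero (Pi.basisFun k (Fin L)) hr hR12 hR23 hR13 hR31

/-- for a tensor `r^{kl}_{ij}` that is skew-symmetric under simultaneous
swapping of the upper pair and the lower pair (`r^{kl}_{ij} = −r^{lk}_{ji}`), the relation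
`R¹²R²³ + R²³R³¹ + R³¹R¹² = 0` on `(k^L)⊗³` is equivalent to the associative
Yang–Baxter equation `R¹²R¹³ − R²³R¹² + R¹³R²³ = 0`. -/
theorem skew_cyclic_iff_AYBE
    (k : Type*) [Field k] [CharZero k] (L : ℕ)
    (r : Fin L → Fin L → Fin L → Fin L → k)
    (hr : ∀ p q i j : Fin L, r p q i j = - r q p j i)
    (R12 R23 R13 R31 : (Fin L → k) ⊗[k] (Fin L → k) ⊗[k] (Fin L → k) →ₗ[k]
      (Fin L → k) ⊗[k] (Fin L → k) ⊗[k] (Fin L → k))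
    (hR12 : ∀ i j m : Fin L,
      R12 ((Pi.basisFun k (Fin L)) i ⊗ₜ[k] (Pi.basisFun k (Fin L)) j
          ⊗ₜ[k] (Pi.basisFun k (Fin L)) m)
        = ∑ p : Fin L, ∑ q : Fin L, r p q i j •
            ((Pi.basisFun k (Fin L)) p ⊗ₜ[k] (Pi.basisFun k (Fin L)) q
              ⊗ₜ[k] (Pi.basisFun k (Fin L)) m))
    (hR23 : ∀ i j m : Fin L,
      R23 ((Pi.basisFun k (Fin L)) i ⊗ₜ[k] (Pi.basisFun k (Fin L)) j
          ⊗ₜ[k] (Pi.basisFun k (Fin L)) m)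
        = ∑ p : Fin L, ∑ q : Fin L, r p q j m •
            ((Pi.basisFun k (Fin L)) i ⊗ₜ[k] (Pi.basisFun k (Fin L)) p
              ⊗ₜ[k] (Pi.basisFun k (Fin L)) q))
    (hR13 : ∀ i j m : Fin L,
      R13 ((Pi.basisFun k (Fin L)) i ⊗ₜ[k] (Pi.basisFun k (Fin L)) j
          ⊗ₜ[k] (Pi.basisFun k (Fin L)) m)
        = ∑ p : Fin L, ∑ q : Fin L, r p q i m •
            ((Pi.basisFun k (Fin L)) p ⊗ₜ[k] (Pi.basisFun k (Fin L)) j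
              ⊗ₜ[k] (Pi.basisFun k (Fin L)) q))
    (hR31 : ∀ i j m : Fin L,
      R31 ((Pi.basisFun k (Fin L)) i ⊗ₜ[k] (Pi.basisFun k (Fin L)) j
          ⊗ₜ[k] (Pi.basisFun k (Fin L)) m)
        = ∑ p : Fin L, ∑ q : Fin L, r p q m i •
            ((Pi.basisFun k (Fin L)) q ⊗ₜ[k] (Pi.basisFun k (Fin L)) j
              ⊗ₜ[k] (Pi.basisFun k (Fin L)) p)) :
    (∀ v : (Fin L → k) ⊗[k] (Fin L → k) ⊗[k] (Fin L → k),
        R12 (R23 v) + R23 (R31 v) + R31 (R12 v) = 0)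
      ↔ (∀ v : (Fin L → k) ⊗[k] (Fin L → k) ⊗[k] (Fin L → k),
          R12 (R13 v) - R23 (R12 v) + R13 (R23 v) = 0) :=
  skew_cyclic_iff_AYBE_general k L r hr R12 R23 R13 R31 hR12 hR23 hR13 hR31
end

section
/- Let g_N be the orthogonal or symplectic Lie algebra realized as the span of F_{ij} = E_{ij} − θ(ij)E_{−j,−i}, and consider the symmetric algebra S(g_N^{⊕L}) with its canonical Lie–Poisson bracket. For a word w = w₁…w_m in {1,…,L}, define f_{ij}(w) := Σ_{a₁,…,a_{m−1}} F_{i a₁|w₁} F_{a₁a₂|w₂} ⋯ F_{a_{m−1} j|w_m}, with f_{ij}(∅) = δ_{ij}, extended linearly to linear combinations of words. Then {f_{ij}(w), f_{kl}(t)} = f_{kj}({{w,t}}') f_{il}({{w,t}}'') + θ(ij)· f_{k,−i}({{φ⁻(w),t}}') f_{−j,l}({{φ⁻(w),t}}''), where {{-,-}} is the KKS double Poisson bracket on k⟨α₁,…,α_L⟩ and φ⁻ is the signed reversal involution. -/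
open TensorProduct

noncomputable section

/-- The index set `{−⌊N/2⌋, …, ⌊N/2⌋}` (with `0` omitted when `N` is even). -/
def idxSet (N : ℕ) : Finset ℤ :=
  (Finset.Icc (-(N / 2 : ℤ)) (N / 2 : ℤ)).filter (fun i => i ≠ 0 ∨ N % 2 = 1)

/-- Indices of rows/columns of `gl(N,k)` in the symmetric labelling. -/
abbrev Idx (N : ℕ) := {i : ℤ // i ∈ idxSet N}

/-- Negation `i ↦ −i` on the index set. -/
def negIdx {N : ℕ} (i : Idx N) : Idx N :=
  ⟨-i.1, by
    have h := i.2
    simp only [idxSet, Finset.mem_filter, Finset.mem_Icc] at h ⊢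
    refine ⟨⟨by omega, by omega⟩, ?_⟩
    rcases h.2 with h0 | h0
    · exact Or.inl (by omega)
    · exact Or.inr h0⟩

/-- The "matrix of generators" algebra morphism
`ρ : k⟨α₁,…,α_L⟩ → Mat(Idx N, S)` determined by `ρ(α_r) = (F_{ij|r})_{ij}`.
Its matrix entries realize the elements `f_{ij}(w)` of `S(g_N^{⊕L})`:
`f_{ij}(w) = ρ(w)_{ij} = Σ F_{i a₁|w₁} F_{a₁a₂|w₂} ⋯ F_{a_{m−1} j|w_m}`,
extended linearly to linear combinations of words. -/
def rhoMap (k : Type*) [Field k] (L N : ℕ) (S : Type*) [CommRing S] [Algebra k S]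
    (F : Fin L → Idx N → Idx N → S) :
    FreeAlgebra k (Fin L) →ₐ[k] Matrix (Idx N) (Idx N) S :=
  FreeAlgebra.lift k (fun r => Matrix.of (fun i j => F r i j))

/-- The linear map `A ⊗ A → S` sending `u ⊗ v ↦ f_{pq}(u) · f_{rs}(v)`, used to express
Sweedler components. -/
def pairF (k : Type*) [Field k] (L N : ℕ) (S : Type*) [CommRing S] [Algebra k S]
    (F : Fin L → Idx N → Idx N → S) (p q r s : Idx N) :
    FreeAlgebra k (Fin L) ⊗[k] FreeAlgebra k (Fin L) →ₗ[k] S :=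
  TensorProduct.lift (LinearMap.mk₂ k
    (fun u v => rhoMap k L N S F u p q * rhoMap k L N S F v r s)
    (fun u u' v => by simp [map_add, Matrix.add_apply, add_mul])
    (fun c u v => by simp [map_smul, Matrix.smul_apply, smul_mul_assoc])
    (fun u v v' => by simp [map_add, Matrix.add_apply, mul_add])
    (fun c u v => by simp [map_smul, Matrix.smul_apply, mul_smul_comm]))

set_option maxHeartbeats 2000000 in
/-- for the canonical Poisson bracket `B` on `S(g_N^{⊕L})`
(`g_N` orthogonal or symplectic), with generators `F r i j = F_{ij|r}` satisfying the
symmetry `F_{ij} = −θ(ij)F_{−j,−i}` and the Lie–Poisson relations, one has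
`{f_{ij}(w), f_{kl}(t)} = f_{kj}({{w,t}}') f_{il}({{w,t}}'')
  + θ(ij) f_{k,−i}({{φ⁻(w),t}}') f_{−j,l}({{φ⁻(w),t}}'')`,
where `{{-,-}}` is the KKS double Poisson bracket and `φ⁻` the signed reversal. -/
theorem centralizer_poisson_bracket
    (k : Type*) [Field k] [CharZero k] (L N : ℕ) (θ : ℤ → k)
    (hθ : (∀ i : ℤ, θ i = 1) ∨ ((∀ i : ℤ, θ i = (Int.sign i : ℤ)) ∧ N % 2 = 0))
    (S : Type*) [CommRing S] [Algebra k S]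
    (B : S →ₗ[k] S →ₗ[k] S)
    (hBskew : ∀ x y, B x y = - B y x)
    (hBleib : ∀ x y z, B x (y * z) = B x y * z + y * B x z)
    (hBjac : ∀ x y z, B x (B y z) + B y (B z x) + B z (B x y) = 0)
    (F : Fin L → Idx N → Idx N → S)
    (hFsym : ∀ (r : Fin L) (i j : Idx N),
      F r i j = - (θ (i.1 * j.1) • F r (negIdx j) (negIdx i)))
    (hFbracket : ∀ (r s : Fin L) (i j p q : Idx N),
      B (F r i j) (F s p q)
        = if r = s then
            (if p = j then F r i q else 0) - (if i = q then F r p j else 0)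
              - θ (i.1 * j.1) •
                  ((if p = negIdx i then F r (negIdx j) q else 0)
                    - (if negIdx j = q then F r p (negIdx i) else 0))
          else 0)
    (D : FreeAlgebra k (Fin L) →ₗ[k] FreeAlgebra k (Fin L) →ₗ[k]
      FreeAlgebra k (Fin L) ⊗[k] FreeAlgebra k (Fin L))
    (hskew : ∀ a b, D a b = - (TensorProduct.comm k _ _) (D b a))
    (hleib : ∀ a b c, D a (b * c)
      = LinearMap.lTensor _ (LinearMap.mulRight k c) (D a b)
        + LinearMap.rTensor _ (LinearMap.mulLeft k b) (D a c))
    (hval : ∀ i j : Fin L, D (FreeAlgebra.ι k i) (FreeAlgebra.ι k j)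
      = if i = j then (1 : FreeAlgebra k (Fin L)) ⊗ₜ[k] FreeAlgebra.ι k i
          - FreeAlgebra.ι k i ⊗ₜ[k] (1 : FreeAlgebra k (Fin L)) else 0)
    (φ : FreeAlgebra k (Fin L) →ₗ[k] FreeAlgebra k (Fin L))
    (hφanti : ∀ x y, φ (x * y) = φ y * φ x)
    (hφone : φ 1 = 1)
    (hφgen : ∀ r : Fin L, φ (FreeAlgebra.ι k r) = - FreeAlgebra.ι k r) :
    ∀ (a b : FreeAlgebra k (Fin L)) (i j p q : Idx N),
      B (rhoMap k L N S F a i j) (rhoMap k L N S F b p q)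
        = pairF k L N S F p j i q (D a b)
          + θ (i.1 * j.1) •
              pairF k L N S F p (negIdx i) (negIdx j) q (D (φ a) b) := by
  classical
  -- index facts
  have hnegval : ∀ x : Idx N, (negIdx x).1 = -x.1 := fun _ => rfl
  have hnegneg : ∀ x : Idx N, negIdx (negIdx x) = x := fun x => Subtype.ext (neg_neg x.1)
  have hneginj : ∀ x y : Idx N, negIdx x = negIdx y → x = y := by
    intro x y h
    have := congrArg negIdx h
    rwa [hnegneg, hnegneg] at this
  have hne : N % 2 = 0 → ∀ x : Idx N, x.1 ≠ 0 := by
    intro hN x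
    have hx := x.2
    simp only [idxSet, Finset.mem_filter] at hx
    rcases hx.2 with h | h
    · exact h
    · omega
  have hsgn : ∀ y : ℤ, y ≠ 0 → y.sign * y.sign = 1 := by
    intro y hy
    rcases hy.lt_or_gt with h | h <;>
      simp [Int.sign_eq_neg_one_of_neg, Int.sign_eq_one_of_pos, h]
  have hθmul : ∀ x y z : Idx N, θ (x.1 * y.1) * θ (y.1 * z.1) = θ (x.1 * z.1) := by
    rcases hθ with h1 | ⟨hs, hN⟩
    · intro x y z; simp [h1]
    · intro x y z
      have hy := hne hN y
      rw [hs, hs, hs]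
      have key : (x.1 * y.1).sign * (y.1 * z.1).sign = (x.1 * z.1).sign := by
        rw [Int.sign_mul, Int.sign_mul, Int.sign_mul]
        calc x.1.sign * y.1.sign * (y.1.sign * z.1.sign)
            = x.1.sign * z.1.sign * (y.1.sign * y.1.sign) := by ring
          _ = x.1.sign * z.1.sign := by rw [hsgn _ hy, mul_one]
      rw [← key]
      push_cast
      ring
  have hθsq : ∀ x : Idx N, θ (x.1 * x.1) = 1 := by
    rcases hθ with h1 | ⟨hs, hN⟩
    · intro x; simp [h1]
    · intro x
      have hx := hne hN x
      rw [hs, Int.sign_mul, hsgn _ hx]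
      push_cast
      ring
  -- basics for B
  have hB1r : ∀ x : S, B x 1 = 0 := by
    intro x
    have h : B x 1 = B x 1 + B x 1 := by simpa using hBleib x 1 1
    exact left_eq_add.mp h
  have hB1l : ∀ y : S, B 1 y = 0 := by
    intro y
    rw [hBskew 1 y, hB1r, neg_zero]
  have hBalgl : ∀ (c : k) (y : S), B (algebraMap k S c) y = 0 := by
    intro c y
    rw [Algebra.algebraMap_eq_smul_one, map_smul, LinearMap.smul_apply, hB1l, smul_zero]
  have hBalgr : ∀ (x : S) (c : k), B x (algebraMap k S c) = 0 := by
    intro x c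
    rw [hBskew, hBalgl, neg_zero]
  have hBleib' : ∀ x y z : S, B (x * y) z = B x z * y + x * B y z := by
    intro x y z
    rw [hBskew (x * y) z, hBleib, neg_add, hBskew x z, hBskew y z]
    ring
  -- basics for D
  have hD1r : ∀ b, D b (1 : FreeAlgebra k (Fin L)) = 0 := by
    intro b
    have h := hleib b 1 1
    rw [mul_one, LinearMap.mulRight_one, LinearMap.mulLeft_one, LinearMap.lTensor_id,
      LinearMap.rTensor_id] at h
    exact left_eq_add.mp h
  have hD1l : ∀ b, D (1 : FreeAlgebra k (Fin L)) b = 0 := by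
    intro b
    rw [hskew, hD1r, map_zero, neg_zero]
  have hDalgl : ∀ (c : k) b, D (algebraMap k (FreeAlgebra k (Fin L)) c) b = 0 := by
    intro c b
    rw [Algebra.algebraMap_eq_smul_one, map_smul, LinearMap.smul_apply, hD1l, smul_zero]
  have hDalgr : ∀ b (c : k), D b (algebraMap k (FreeAlgebra k (Fin L)) c) = 0 := by
    intro b c
    rw [Algebra.algebraMap_eq_smul_one, map_smul, hD1r, smul_zero]
  have hcomm_l : ∀ (f : FreeAlgebra k (Fin L) →ₗ[k] FreeAlgebra k (Fin L))
      (t : FreeAlgebra k (Fin L) ⊗[k] FreeAlgebra k (Fin L)),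
      (TensorProduct.comm k _ _) (LinearMap.lTensor _ f t)
        = LinearMap.rTensor _ f ((TensorProduct.comm k _ _) t) := by
    intro f t
    induction t using TensorProduct.induction_on with
    | zero => simp
    | tmul x y => simp
    | add x y hx hy => simp [map_add, hx, hy]
  have hcomm_r : ∀ (f : FreeAlgebra k (Fin L) →ₗ[k] FreeAlgebra k (Fin L))
      (t : FreeAlgebra k (Fin L) ⊗[k] FreeAlgebra k (Fin L)),
      (TensorProduct.comm k _ _) (LinearMap.rTensor _ f t)
        = LinearMap.lTensor _ f ((TensorProduct.comm k _ _) t) := by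
    intro f t
    induction t using TensorProduct.induction_on with
    | zero => simp
    | tmul x y => simp
    | add x y hx hy => simp [map_add, hx, hy]
  have hleib1 : ∀ x y b, D (x * y) b
      = LinearMap.rTensor _ (LinearMap.mulRight k y) (D x b)
        + LinearMap.lTensor _ (LinearMap.mulLeft k x) (D y b) := by
    intro x y b
    rw [hskew (x * y) b, hleib b x y, map_add, hcomm_l, hcomm_r, neg_add,
      hskew x b, hskew y b, map_neg, map_neg]
  -- φ on scalars
  have hφalg : ∀ c : k, φ (algebraMap k (FreeAlgebra k (Fin L)) c)
      = algebraMap k (FreeAlgebra k (Fin L)) c := by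
    intro c
    rw [Algebra.algebraMap_eq_smul_one, map_smul, hφone]
  -- matrix entry lemmas
  have hρι : ∀ (r : Fin L) (x y : Idx N),
      rhoMap k L N S F (FreeAlgebra.ι k r) x y = F r x y := by
    intro r x y; simp [rhoMap]
  have hρ1 : ∀ x y : Idx N,
      rhoMap k L N S F 1 x y = if x = y then 1 else 0 := by
    intro x y; rw [map_one]; exact Matrix.one_apply
  have hρalg : ∀ (c : k) (x y : Idx N),
      rhoMap k L N S F (algebraMap k (FreeAlgebra k (Fin L)) c) x y
        = if x = y then algebraMap k S c else 0 := by
    intro c x y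
    rw [AlgHom.commutes]
    exact Matrix.algebraMap_matrix_apply
  have hρmul : ∀ (u v : FreeAlgebra k (Fin L)) (x y : Idx N),
      rhoMap k L N S F (u * v) x y
        = ∑ m : Idx N, rhoMap k L N S F u x m * rhoMap k L N S F v m y := by
    intro u v x y
    rw [map_mul]
    exact Matrix.mul_apply
  have hpairtmul : ∀ (p q r s : Idx N) (u v : FreeAlgebra k (Fin L)),
      pairF k L N S F p q r s (u ⊗ₜ[k] v)
        = rhoMap k L N S F u p q * rhoMap k L N S F v r s := fun _ _ _ _ _ _ => rfl
  -- ρ ∘ φ identity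
  have hρφ : ∀ (w : FreeAlgebra k (Fin L)) (x y : Idx N),
      rhoMap k L N S F (φ w) x y
        = θ (x.1 * y.1) • rhoMap k L N S F w (negIdx y) (negIdx x) := by
    intro w
    induction w using FreeAlgebra.induction with
    | grade0 c =>
      intro x y
      rw [hφalg, hρalg, hρalg]
      by_cases h : x = y
      · subst h
        simp [hθsq x]
      · have h2 : ¬ (negIdx y = negIdx x) := fun hh => h (hneginj y x hh).symm
        simp [h, h2]
    | grade1 r =>
      intro x y
      rw [hφgen, map_neg, Matrix.neg_apply, hρι, hρι, hFsym r x y, neg_neg]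
    | mul u v hu hv =>
      intro x y
      rw [hφanti, hρmul, hρmul, Finset.smul_sum]
      refine Fintype.sum_equiv ⟨negIdx, negIdx, hnegneg, hnegneg⟩ _ _ fun m => ?_
      simp only [Equiv.coe_fn_mk]
      rw [hv x m, hu m y, smul_mul_smul_comm, hθmul x m y]
      exact congrArg _ (mul_comm _ _)
    | add u v hu hv =>
      intro x y
      simp only [map_add, Matrix.add_apply, hu, hv, smul_add]
  -- pairF composition lemmas
  have L1 : ∀ (p q r s : Idx N) (v : FreeAlgebra k (Fin L))
      (t : FreeAlgebra k (Fin L) ⊗[k] FreeAlgebra k (Fin L)),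
      pairF k L N S F p q r s (LinearMap.lTensor _ (LinearMap.mulRight k v) t)
        = ∑ m : Idx N, rhoMap k L N S F v m s * pairF k L N S F p q r m t := by
    intro p q r s v t
    induction t using TensorProduct.induction_on with
    | zero => simp
    | tmul x y =>
      rw [LinearMap.lTensor_tmul, hpairtmul, LinearMap.mulRight_apply, hρmul y v r s,
        Finset.mul_sum]
      exact Finset.sum_congr rfl fun m _ => by rw [hpairtmul]; ring
    | add x y hx hy =>
      simp only [map_add, hx, hy, mul_add, Finset.sum_add_distrib]
  have L2 : ∀ (p q r s : Idx N) (u : FreeAlgebra k (Fin L))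
      (t : FreeAlgebra k (Fin L) ⊗[k] FreeAlgebra k (Fin L)),
      pairF k L N S F p q r s (LinearMap.rTensor _ (LinearMap.mulLeft k u) t)
        = ∑ m : Idx N, rhoMap k L N S F u p m * pairF k L N S F m q r s t := by
    intro p q r s u t
    induction t using TensorProduct.induction_on with
    | zero => simp
    | tmul x y =>
      rw [LinearMap.rTensor_tmul, hpairtmul, LinearMap.mulLeft_apply, hρmul u x p q,
        Finset.sum_mul]
      exact Finset.sum_congr rfl fun m _ => by rw [hpairtmul]; ring
    | add x y hx hy =>
      simp only [map_add, hx, hy, mul_add, Finset.sum_add_distrib]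
  have L3 : ∀ (p q r s : Idx N) (v : FreeAlgebra k (Fin L))
      (t : FreeAlgebra k (Fin L) ⊗[k] FreeAlgebra k (Fin L)),
      pairF k L N S F p q r s (LinearMap.rTensor _ (LinearMap.mulRight k v) t)
        = ∑ m : Idx N, rhoMap k L N S F v m q * pairF k L N S F p m r s t := by
    intro p q r s v t
    induction t using TensorProduct.induction_on with
    | zero => simp
    | tmul x y =>
      rw [LinearMap.rTensor_tmul, hpairtmul, LinearMap.mulRight_apply, hρmul x v p q,
        Finset.sum_mul]
      exact Finset.sum_congr rfl fun m _ => by rw [hpairtmul]; ring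
    | add x y hx hy =>
      simp only [map_add, hx, hy, mul_add, Finset.sum_add_distrib]
  have L4 : ∀ (p q r s : Idx N) (u : FreeAlgebra k (Fin L))
      (t : FreeAlgebra k (Fin L) ⊗[k] FreeAlgebra k (Fin L)),
      pairF k L N S F p q r s (LinearMap.lTensor _ (LinearMap.mulLeft k u) t)
        = ∑ m : Idx N, rhoMap k L N S F u r m * pairF k L N S F p q m s t := by
    intro p q r s u t
    induction t using TensorProduct.induction_on with
    | zero => simp
    | tmul x y =>
      rw [LinearMap.lTensor_tmul, hpairtmul, LinearMap.mulLeft_apply, hρmul u y r s,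
        Finset.mul_sum]
      exact Finset.sum_congr rfl fun m _ => by rw [hpairtmul]; ring
    | add x y hx hy =>
      simp only [map_add, hx, hy, mul_add, Finset.sum_add_distrib]
  -- main induction
  intro a
  induction a using FreeAlgebra.induction with
  | grade0 c =>
    intro b i j p q
    rw [hρalg, hDalgl, hφalg, hDalgl]
    by_cases h : i = j <;> simp [h, hBalgl]
  | grade1 r =>
    intro b
    induction b using FreeAlgebra.induction with
    | grade0 c =>
      intro i j p q
      rw [hρalg, hDalgr, hDalgr]
      by_cases h : p = q <;> simp [h, hBalgr]
    | grade1 s =>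
      intro i j p q
      rw [hρι, hρι, hFbracket r s i j p q, hval r s, hφgen r, map_neg,
        LinearMap.neg_apply, hval r s]
      by_cases h : r = s
      · subst h
        rw [if_pos rfl, if_pos rfl]
        simp only [map_sub, map_neg, hpairtmul, hρ1, hρι, boole_mul, mul_boole,
          smul_neg, smul_sub]
        ring
      · simp [h]
    | mul u v hu hv =>
      intro i j p q
      rw [hρmul u v p q, map_sum,
        hleib (FreeAlgebra.ι k r) u v, hleib (φ (FreeAlgebra.ι k r)) u v,
        map_add, map_add,
        L1 p j i q v (D (FreeAlgebra.ι k r) u), L2 p j i q u (D (FreeAlgebra.ι k r) v),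
        L1 p (negIdx i) (negIdx j) q v (D (φ (FreeAlgebra.ι k r)) u),
        L2 p (negIdx i) (negIdx j) q u (D (φ (FreeAlgebra.ι k r)) v),
        smul_add, Finset.smul_sum, Finset.smul_sum,
        ← Finset.sum_add_distrib, ← Finset.sum_add_distrib, ← Finset.sum_add_distrib]
      refine Finset.sum_congr rfl fun m _ => ?_
      rw [hBleib, hu i j p m, hv i j m q]
      simp only [Algebra.smul_def]
      ring
    | add u v hu hv =>
      intro i j p q
      simp only [map_add, Matrix.add_apply, hu, hv, smul_add]
      abel
  | mul x y hx hy =>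
    intro b i j p q
    have e1 : ∀ t : FreeAlgebra k (Fin L) ⊗[k] FreeAlgebra k (Fin L),
        θ (i.1 * j.1) • (∑ m : Idx N,
            rhoMap k L N S F (φ x) m (negIdx i) * pairF k L N S F p m (negIdx j) q t)
          = ∑ m : Idx N, rhoMap k L N S F x i m *
              (θ (m.1 * j.1) • pairF k L N S F p (negIdx m) (negIdx j) q t) := by
      intro t
      rw [Finset.smul_sum]
      refine Fintype.sum_equiv ⟨negIdx, negIdx, hnegneg, hnegneg⟩ _ _ fun m => ?_
      simp only [Equiv.coe_fn_mk, hnegneg]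
      rw [hρφ x m (negIdx i), hnegneg i, smul_mul_assoc, smul_smul, mul_smul_comm]
      congr 1
      simp only [hnegval]
      have h3 := hθmul (negIdx m) i j
      simp only [hnegval] at h3
      rw [show m.1 * -i.1 = -m.1 * i.1 by ring]
      linear_combination h3
    have e2 : ∀ t : FreeAlgebra k (Fin L) ⊗[k] FreeAlgebra k (Fin L),
        θ (i.1 * j.1) • (∑ m : Idx N,
            rhoMap k L N S F (φ y) (negIdx j) m * pairF k L N S F p (negIdx i) m q t)
          = ∑ m : Idx N, (θ (i.1 * m.1) • pairF k L N S F p (negIdx i) (negIdx m) q t)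
              * rhoMap k L N S F y m j := by
      intro t
      rw [Finset.smul_sum]
      refine Fintype.sum_equiv ⟨negIdx, negIdx, hnegneg, hnegneg⟩ _ _ fun m => ?_
      simp only [Equiv.coe_fn_mk, hnegneg]
      rw [hρφ y (negIdx j) m, hnegneg j, smul_mul_assoc, smul_smul, smul_mul_assoc]
      rw [show rhoMap k L N S F y (negIdx m) j * pairF k L N S F p (negIdx i) m q t
          = pairF k L N S F p (negIdx i) m q t * rhoMap k L N S F y (negIdx m) j from
          mul_comm _ _]
      rw [← smul_mul_assoc, ← smul_mul_assoc]
      congr 2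
      simp only [hnegval]
      have h3 := hθmul i j (negIdx m)
      simp only [hnegval] at h3
      rw [show -j.1 * m.1 = j.1 * -m.1 by ring]
      linear_combination h3
    rw [hρmul x y i j, map_sum, LinearMap.sum_apply]
    simp only [hBleib', hx, hy]
    rw [hleib1 x y b, hφanti x y, hleib1 (φ y) (φ x) b, map_add, map_add,
      L3 p j i q y (D x b), L4 p j i q x (D y b),
      L3 p (negIdx i) (negIdx j) q (φ x) (D (φ y) b),
      L4 p (negIdx i) (negIdx j) q (φ y) (D (φ x) b),
      smul_add, e1 (D (φ y) b), e2 (D (φ x) b),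
      ← Finset.sum_add_distrib, ← Finset.sum_add_distrib, ← Finset.sum_add_distrib]
    refine Finset.sum_congr rfl fun m _ => ?_
    simp only [Algebra.smul_def]
    ring
  | add x y hx hy =>
    intro b i j p q
    simp only [map_add, Matrix.add_apply, LinearMap.add_apply, hx, hy, smul_add]
    abel

end
end
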